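/- arXiv:1805.02273 — 11 statements merged into one kernel-verified Lean document; each statement's English description precedes it below -/
import Mathlib

section
/- Let A be an F-algebra and let R_1, ..., R_n be finitely many S-subalgebras of A each satisfying R_i F = A. Then R = ∩ R_i satisfies RF = A. In particular, a finite intersection of S-nice subalgebras of A is an S-nice subalgebra of A. -/
/-!
Every element of `span F Rᵢ` becomes an element of `Rᵢ` after multiplication by a nonzero
`cᵢ ∈ S`; the product of the finitely many `cᵢ` is a common denominator that moves the element
into `⋂ Rᵢ`, and it is invertible in `F`.
-/

open Submodule

theorem Submodule.exists_smul_mem_iInf {R A ι : Type*} [CommSemiring R] [AddCommMonoid A]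
    [Module R A] [Fintype ι] (M : Submonoid R) (N : ι → Submodule R A) {a : A}
    (h : ∀ i, ∃ c ∈ M, c • a ∈ N i) : ∃ c ∈ M, c • a ∈ ⨅ i, N i := by
  classical
  choose c hcM hcN using h
  refine ⟨∏ i, c i, prod_mem fun i _ => hcM i, mem_iInf _ |>.mpr fun i => ?_⟩
  rw [← Finset.prod_erase_mul _ _ (Finset.mem_univ i), mul_smul]
  exact smul_mem _ _ (hcN i)

namespace IsLocalization

variable {R : Type*} [CommRing R] (M : Submonoid R) {S : Type*} [CommRing S] [Algebra R S]
  [IsLocalization M S] {A : Type*} [AddCommMonoid A] [Module R A] [Module S A]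
  [IsScalarTower R S A]

include M in
theorem exists_smul_mem_of_mem_span (N : Submodule R A) {a : A}
    (ha : a ∈ span S (N : Set A)) : ∃ c ∈ M, c • a ∈ N := by
  obtain ⟨y, hy, c, rfl⟩ := (mem_span_iff M).mp ha
  refine ⟨c, c.2, ?_⟩
  rwa [← algebraMap_smul S (c : R), smul_smul, mk'_spec', map_one, one_smul, ← span_eq N]

include M in
theorem mem_span_of_smul_mem (N : Submodule R A) {a : A} {c : R} (hc : c ∈ M)
    (hca : c • a ∈ N) : a ∈ span S (N : Set A) := by
  have : a = mk' S 1 (⟨c, hc⟩ : M) • c • a := by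
    rw [← algebraMap_smul S c a, smul_smul, mk'_spec, map_one, one_smul]
  rw [this]
  exact smul_mem _ _ (subset_span hca)

include M in
theorem span_iInf_eq_top {ι : Type*} [Fintype ι] (N : ι → Submodule R A)
    (hN : ∀ i, span S (N i : Set A) = ⊤) : span S ((⨅ i, N i : Submodule R A) : Set A) = ⊤ := by
  refine eq_top_iff.mpr fun a _ => ?_
  obtain ⟨c, hc, hca⟩ := exists_smul_mem_iInf M N fun i =>
    exists_smul_mem_of_mem_span M (N i) (by rw [hN i]; trivial)
  exact mem_span_of_smul_mem M _ hc hca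

end IsLocalization

theorem stmt3_general {S F A : Type*} [CommRing S] [Field F] [Ring A]
    [Algebra S F] [IsFractionRing S F] [Algebra F A] [Algebra S A] [IsScalarTower S F A]
    {ι : Type*} [Fintype ι] [Nonempty ι]
    (R : ι → Subalgebra S A)
    (hspan : ∀ i, Submodule.span F ((R i : Set A)) = ⊤) :
    Submodule.span F ((⨅ i, R i : Subalgebra S A) : Set A) = ⊤ ∧
      ((∀ i, ∀ x : F, algebraMap F A x ∈ R i ↔ ∃ s : S, algebraMap S F s = x) →
        ∀ x : F, algebraMap F A x ∈ (⨅ i, R i : Subalgebra S A) ↔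
          ∃ s : S, algebraMap S F s = x) := by
  refine ⟨?_, fun hnice x => ?_⟩
  · have := IsLocalization.span_iInf_eq_top (nonZeroDivisors S) (S := F)
      (fun i => Subalgebra.toSubmodule (R i)) hspan
    rwa [← Algebra.iInf_toSubmodule] at this
  · rw [Algebra.mem_iInf]
    exact ⟨fun h => (hnice (Classical.arbitrary ι) x).mp (h _),
      fun h i => (hnice i x).mpr h⟩

/-- If `R₁, …, Rₙ` are finitely many `S`-subalgebras of `A`, each with
`Rᵢ F = A`, then `R = ⋂ Rᵢ` satisfies `RF = A`; in particular, a finite intersection of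
`S`-nice subalgebras (those with moreover `Rᵢ ∩ F = S`) is `S`-nice. -/
theorem stmt3 {S F A : Type*} [CommRing S] [IsDomain S] [Field F] [Ring A]
    [Algebra S F] [IsFractionRing S F] [Algebra F A] [Algebra S A] [IsScalarTower S F A]
    {ι : Type*} [Fintype ι] [Nonempty ι]
    (R : ι → Subalgebra S A)
    (hspan : ∀ i, Submodule.span F ((R i : Set A)) = ⊤) :
    Submodule.span F ((⨅ i, R i : Subalgebra S A) : Set A) = ⊤ ∧
      ((∀ i, ∀ x : F, algebraMap F A x ∈ R i ↔ ∃ s : S, algebraMap S F s = x) →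
        ∀ x : F, algebraMap F A x ∈ (⨅ i, R i : Subalgebra S A) ↔
          ∃ s : S, algebraMap S F s = x) :=
  stmt3_general R hspan
end

section
/- Let B be an S-stable basis of the F-algebra A over F and let x_0 be a nonzero element of A not in B. Then there exists b_0 ∈ B such that {x_0} ∪ (B \ {b_0}) is an S-stable basis of A over F. -/
/-!
Pick `b₀ ∈ B` at which `x₀` has a nonzero coordinate; by the Steinitz exchange
`B' = {x₀} ∪ (B \ {b₀})` is again a basis. Clearing denominators gives `d, t ∈ S⁰` with
`d x₀ ∈ span_S B` and `t b₀ ∈ span_S B'`, hence `d B' ⊆ span_S B` and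
`t span_S B ⊆ span_S B'`. If `C` stabilizes `B`, then `(t d) C` stabilizes `B'`, since
`(t d c) y = t (c (d y)) ∈ t span_S B ⊆ span_S B'`.
-/

/-- A basis of `A` over `F`, as a set. -/
def IsBasisSet (F : Type*) {A : Type*} [Field F] [Ring A] [Algebra F A] (B : Set A) : Prop :=
  LinearIndependent F ((↑) : B → A) ∧ Submodule.span F B = ⊤

/-- `B` is an `S`-stable basis of `A` over `F`: it is a basis and some basis `C` of `A`
over `F` stabilizes it, i.e. `c * b ∈ Σ_{y ∈ B} S y` for all `c ∈ C`, `b ∈ B`. -/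
def IsStableBasis (S : Type*) (F : Type*) {A : Type*} [CommRing S] [Field F] [Ring A]
    [Algebra S F] [Algebra F A] [Algebra S A] [IsScalarTower S F A] (B : Set A) : Prop :=
  IsBasisSet F B ∧ ∃ C : Set A, IsBasisSet F C ∧
    ∀ c ∈ C, ∀ b ∈ B, c * b ∈ Submodule.span S B

open Submodule Pointwise nonZeroDivisors

namespace IsBasisSet

variable {F A : Type*} [Field F] [Ring A] [Algebra F A]

theorem smul {C : Set A} (hC : IsBasisSet F C) {u : F} (hu : u ≠ 0) : IsBasisSet F (u • C) := by
  refine ⟨?_, by rw [span_smul_eq_of_isUnit _ _ hu.isUnit, hC.2]⟩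
  exact LinearIndepOn.id_image (v := (u • ·))
    (hC.1.map' _ (LinearEquiv.smulOfNeZero F A u hu).ker)

theorem insert_sdiff_singleton {B : Set A} (hB : IsBasisSet F B) {b₀ x : A} (hb₀ : b₀ ∈ B)
    (hx : x ∉ span F (B \ {b₀})) : IsBasisSet F (insert x (B \ {b₀})) := by
  have hB_eq : insert b₀ (B \ {b₀}) = B := Set.insert_sdiff_self_of_mem hb₀
  refine ⟨LinearIndepOn.id_insert (LinearIndepOn.mono hB.1 Set.sdiff_subset) hx,
    eq_top_iff.2 ?_⟩
  have hb₀_mem : b₀ ∈ span F (insert x (B \ {b₀})) :=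
    mem_span_insert_exchange (by rw [hB_eq, hB.2]; trivial) hx
  have h_sub : insert b₀ (B \ {b₀}) ⊆ span F (insert x (B \ {b₀})) :=
    Set.insert_subset hb₀_mem (subset_span.trans (span_mono (Set.subset_insert _ _)))
  rwa [hB_eq, ← span_le, hB.2] at h_sub

theorem exists_notMem_span_sdiff_singleton {B : Set A} (hB : IsBasisSet F B) {x : A}
    (hx : x ≠ 0) : ∃ b₀ ∈ B, x ∉ span F (B \ {b₀}) := by
  classical
  let b := Module.Basis.mk hB.1 (by rw [Subtype.range_coe]; exact hB.2.ge)
  obtain ⟨i, hi⟩ : ∃ i, b.repr x i ≠ 0 := by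
    by_contra! h
    exact hx (b.repr.map_eq_zero_iff.1 (Finsupp.ext h))
  refine ⟨i, i.2, fun hmem => hi ?_⟩
  have himage : B \ {(i : A)} = b '' {i}ᶜ := by
    rw [Module.Basis.coe_mk]; ext; simp
  rw [himage, Module.Basis.mem_span_image] at hmem
  simpa using @hmem i

end IsBasisSet

namespace IsStableBasis

variable {S F A : Type*} [CommRing S] [Field F] [Ring A] [Algebra S F] [IsFractionRing S F]
  [Algebra F A] [Algebra S A] [IsScalarTower S F A]

theorem insert_sdiff_singleton {B : Set A} (hB : IsStableBasis S F B) {b₀ x : A}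
    (hb₀ : b₀ ∈ B) (hx : x ∉ span F (B \ {b₀})) :
    IsStableBasis S F (insert x (B \ {b₀})) := by
  obtain ⟨hB_basis, C, hC, hCB⟩ := hB
  have hB' := hB_basis.insert_sdiff_singleton hb₀ hx
  obtain ⟨d, hd⟩ : ∃ d : S⁰, d • x ∈ span S B :=
    multiple_mem_span_of_mem_localization_span S⁰ F _ _ (hB_basis.2 ▸ mem_top)
  obtain ⟨t, ht⟩ : ∃ t : S⁰, t • b₀ ∈ span S (insert x (B \ {b₀})) :=
    multiple_mem_span_of_mem_localization_span S⁰ F _ _ (hB'.2 ▸ mem_top)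
  have h_mul_t : ∀ z ∈ span S B, (t : S) • z ∈ span S (insert x (B \ {b₀})) := by
    intro z hz
    refine (span_le (p := (span S _).comap (DistribSMul.toLinearMap S A (t : S)))).2 ?_ hz
    intro b hb
    by_cases hb_eq : b = b₀
    · exact hb_eq ▸ ht
    · exact smul_mem _ _ <| subset_span <|
        Set.mem_insert_of_mem _ (Set.mem_sdiff_singleton.2 ⟨hb, hb_eq⟩)
  have h_mul_d : ∀ y ∈ insert x (B \ {b₀}), (d : S) • y ∈ span S B := by
    rintro y (rfl | hy)
    · exact hd
    · exact smul_mem _ _ (subset_span hy.1)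
  have h_mul_C : ∀ c ∈ C, ∀ z ∈ span S B, c * z ∈ span S B := fun c hc z hz =>
    (span_le (p := (span S B).comap (LinearMap.mulLeft S c))).2 (hCB c hc) hz
  refine ⟨hB', algebraMap S F (t * d : S) • C,
    hC.smul (IsLocalization.map_units F (t * d)).ne_zero, ?_⟩
  rintro _ ⟨c, hc, rfl⟩ y hy
  have h_eq : (algebraMap S F (t * d : S) • c) * y = (t : S) • (c * ((d : S) • y)) := by
    rw [smul_mul_assoc, algebraMap_smul, mul_smul, mul_smul_comm]
  exact h_eq ▸ h_mul_t _ (h_mul_C c hc _ (h_mul_d y hy))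

end IsStableBasis

theorem stmt4_general {S F A : Type*} [CommRing S] [Field F] [Ring A]
    [Algebra S F] [IsFractionRing S F] [Algebra F A] [Algebra S A] [IsScalarTower S F A]
    (B : Set A) (hB : IsStableBasis S F B)
    (x₀ : A) (hx₀ : x₀ ≠ 0) :
    ∃ b₀ ∈ B, IsStableBasis S F (insert x₀ (B \ {b₀})) := by
  obtain ⟨b₀, hb₀, hx₀_notMem⟩ := hB.1.exists_notMem_span_sdiff_singleton hx₀
  exact ⟨b₀, hb₀, hB.insert_sdiff_singleton hb₀ hx₀_notMem⟩

/-- If `B` is an `S`-stable basis of `A` over `F` and `x₀ ≠ 0` with `x₀ ∉ B`,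
then there is `b₀ ∈ B` such that `{x₀} ∪ (B \ {b₀})` is an `S`-stable basis of `A` over `F`. -/
theorem stmt4 {S F A : Type*} [CommRing S] [IsDomain S] [Field F] [Ring A]
    [Algebra S F] [IsFractionRing S F] [Algebra F A] [Algebra S A] [IsScalarTower S F A]
    (B : Set A) (hB : IsStableBasis S F B)
    (x₀ : A) (hx₀ : x₀ ≠ 0) (hx₀B : x₀ ∉ B) :
    ∃ b₀ ∈ B, IsStableBasis S F (insert x₀ (B \ {b₀})) :=
  stmt4_general B hB x₀ hx₀
end

section
/- Let B be an S-stable basis of the F-algebra A over F and let C ⊆ A be a finite linearly independent set. Then there exists a finite subset C_1 ⊆ B such that C ∪ (B \ C_1) is an S-stable basis of A over F containing C. -/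
/-!
Extend `C` to a basis `T ⊆ C ∪ B`. If `b ∈ B \ T` lay outside the `B`-supports of the elements
of `C`, then `T`, hence all of `A`, would be spanned by `B \ {b}`; so `B \ T` is finite and
`T = C ∪ (B \ (B \ T))`. As `T` and `B` differ in finitely many vectors, clearing denominators
gives nonzero `s, t ∈ S` with `s • span_S B ⊆ span_S T` and `t • span_S T ⊆ span_S B`, and if `D`
stabilizes `B`, then `s t D` stabilizes `T`.
-/

namespace IsLocalization

variable {R L N : Type*} [CommRing R] (M : Submonoid R) [CommRing L] [Algebra R L]
  [IsLocalization M L] [AddCommMonoid N] [Module R N] [Module L N] [IsScalarTower R L N]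

theorem exists_smul_mem_span_of_mem_span {W : Set N} {x : N}
    (hx : x ∈ Submodule.span L W) : ∃ s ∈ M, s • x ∈ Submodule.span R W := by
  obtain ⟨y, hy, z, rfl⟩ := (mem_span_iff M).1 hx
  refine ⟨z, z.2, ?_⟩
  rwa [← algebraMap_smul L (z : R), smul_smul, mul_mk'_eq_mk'_of_mul, mul_one, mk'_self, one_smul]

theorem exists_smul_mem_span_of_subset_span {W V : Set N} (hV : V.Finite)
    (hVW : V ⊆ Submodule.span L W) : ∃ s ∈ M, ∀ v ∈ V, s • v ∈ Submodule.span R W := by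
  induction V, hV using Set.Finite.induction_on with
  | empty => exact ⟨1, M.one_mem, by simp⟩
  | @insert a V _ _ ih =>
    obtain ⟨s, hsM, hs⟩ := ih ((Set.subset_insert a V).trans hVW)
    obtain ⟨t, htM, ht⟩ := exists_smul_mem_span_of_mem_span M (hVW (V.mem_insert a))
    refine ⟨t * s, M.mul_mem htM hsM, ?_⟩
    rintro v (rfl | hv)
    · rw [mul_comm, mul_smul]
      exact Submodule.smul_mem _ _ ht
    · rw [mul_smul]
      exact Submodule.smul_mem _ _ (hs v hv)

theorem exists_smul_mem_span_of_finite_diff {W W' : Set N} (hfin : (W \ W').Finite)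
    (hW : W \ W' ⊆ Submodule.span L W') :
    ∃ s ∈ M, ∀ x ∈ Submodule.span R W, s • x ∈ Submodule.span R W' := by
  obtain ⟨s, hsM, hs⟩ := exists_smul_mem_span_of_subset_span M hfin hW
  refine ⟨s, hsM, fun x hx => ?_⟩
  suffices Submodule.span R W ≤ (Submodule.span R W').comap (DistribSMul.toLinearMap R N s) from
    this hx
  refine Submodule.span_le.2 fun w hw => ?_
  by_cases hwW' : w ∈ W'
  · exact Submodule.smul_mem _ _ (Submodule.subset_span hwW')
  · exact hs w ⟨hw, hwW'⟩

end IsLocalization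

theorem LinearIndepOn.diff_subset_of_subset_span {K V : Type*} [DivisionRing K] [AddCommGroup V]
    [Module K V] {B B₀ C T : Set V} (hB : LinearIndepOn K id B) (hB₀B : B₀ ⊆ B)
    (hCB₀ : C ⊆ Submodule.span K B₀) (hTCB : T ⊆ C ∪ B) (hBT : B ⊆ Submodule.span K T) :
    B \ T ⊆ B₀ := by
  rintro b ⟨hbB, hbT⟩
  by_contra hbB₀
  have hB₀b : B₀ ⊆ B \ {b} := fun y hy => ⟨hB₀B hy, fun hyb => hbB₀ (hyb ▸ hy)⟩
  have hT : T ⊆ Submodule.span K (B \ {b}) := by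
    intro x hx
    rcases hTCB hx with hxC | hxB
    · exact Submodule.span_mono hB₀b (hCB₀ hxC)
    · exact Submodule.subset_span ⟨hxB, fun hxb => hbT (hxb ▸ hx)⟩
  have hb : b ∉ Submodule.span K (B \ {b}) := by simpa using hB.notMem_span hbB
  exact hb (Submodule.span_le.2 hT (hBT hbB))

section StableBasis

variable {S F A : Type*} [CommRing S] [Field F] [Ring A] [Algebra S F] [Algebra F A]
  [Algebra S A] [IsScalarTower S F A]

theorem IsBasisSet.image_linearEquiv {D : Set A} (hD : IsBasisSet F D) (e : A ≃ₗ[F] A) :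
    IsBasisSet F (e '' D) := by
  refine ⟨LinearIndepOn.id_image (hD.1.map' (e : A →ₗ[F] A) e.ker), ?_⟩
  rw [Submodule.span_image_linearEquiv, hD.2, Submodule.map_top, LinearEquiv.range]

theorem mul_mem_span_of_forall_mul_mem_span {W : Set A} {c : A}
    (hc : ∀ w ∈ W, c * w ∈ Submodule.span S W) {y : A} (hy : y ∈ Submodule.span S W) :
    c * y ∈ Submodule.span S W :=
  (Submodule.span_le (p := (Submodule.span S W).comap (LinearMap.mulLeft S c))).2 hc hy

theorem IsStableBasis.of_smul_mem_span [IsFractionRing S F] {W W' : Set A}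
    (hW : IsStableBasis S F W) (hW' : IsBasisSet F W') {s t : S}
    (hs : s ∈ nonZeroDivisors S) (ht : t ∈ nonZeroDivisors S)
    (hWW' : ∀ x ∈ Submodule.span S W, s • x ∈ Submodule.span S W')
    (hW'W : ∀ x ∈ Submodule.span S W', t • x ∈ Submodule.span S W) :
    IsStableBasis S F W' := by
  obtain ⟨-, D, hD, hDW⟩ := hW
  have hst : algebraMap S F (s * t) ≠ 0 :=
    (IsLocalization.map_units F (⟨s * t, mul_mem hs ht⟩ : nonZeroDivisors S)).ne_zero
  let e := LinearEquiv.smulOfNeZero F A _ hst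
  refine ⟨hW', e '' D, hD.image_linearEquiv e, ?_⟩
  -- `D` scaled by `s * t` stabilizes `W'`, because `(s t d) x = s (d (t x))`.
  rintro _ ⟨d, hd, rfl⟩ x hx
  have hdtx : d * (t • x) ∈ Submodule.span S W :=
    mul_mem_span_of_forall_mul_mem_span (hDW d hd) (hW'W x (Submodule.subset_span hx))
  have : e d * x = s • (d * (t • x)) := by
    simp only [e, LinearEquiv.smulOfNeZero_apply, algebraMap_smul, mul_smul, smul_mul_assoc,
      mul_smul_comm]
  rw [this]
  exact hWW' _ hdtx

end StableBasis

theorem stmt5_general {S F A : Type*} [CommRing S] [Field F] [Ring A]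
    [Algebra S F] [IsFractionRing S F] [Algebra F A] [Algebra S A] [IsScalarTower S F A]
    (B : Set A) (hB : IsStableBasis S F B)
    (C : Set A) (hCfin : C.Finite) (hCli : LinearIndependent F ((↑) : C → A)) :
    ∃ C₁ ⊆ B, C₁.Finite ∧ IsStableBasis S F (C ∪ (B \ C₁)) ∧ C ⊆ C ∪ (B \ C₁) := by
  have hBli : LinearIndepOn F id B := hB.1.1
  have hBsp : Submodule.span F B = ⊤ := hB.1.2
  replace hCli : LinearIndepOn F id C := hCli
  set T := hCli.extend (Set.subset_union_left : C ⊆ C ∪ B)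
  have hCT : C ⊆ T := hCli.subset_extend _
  have hTCB : T ⊆ C ∪ B := hCli.extend_subset _
  have hTsp : Submodule.span F T = ⊤ := by
    rw [hCli.span_extend_eq_span, Submodule.span_union, hBsp, sup_top_eq]
  obtain ⟨B₀, hB₀B, hCB₀⟩ := Submodule.subset_span_finite_of_subset_span
    (R := F) (s := B) (t := hCfin.toFinset) (by simp [hBsp])
  have hBTfin : (B \ T).Finite := B₀.finite_toSet.subset <|
    hBli.diff_subset_of_subset_span hB₀B (by simpa using hCB₀) hTCB (by simp [hTsp])
  have hT : C ∪ (B \ (B \ T)) = T := by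
    rw [Set.sdiff_sdiff_right_self]
    exact subset_antisymm (Set.union_subset hCT Set.inter_subset_right)
      fun x hx => (hTCB hx).imp_right fun hxB => ⟨hxB, hx⟩
  refine ⟨B \ T, Set.sdiff_subset, hBTfin, ?_, Set.subset_union_left⟩
  rw [hT]
  obtain ⟨s, hs, hBT⟩ := IsLocalization.exists_smul_mem_span_of_finite_diff
    (nonZeroDivisors S) (L := F) hBTfin (by simp [hTsp])
  have hTBfin : (T \ B).Finite := hCfin.subset fun x hx => (hTCB hx.1).resolve_right hx.2
  obtain ⟨t, ht, hTB⟩ := IsLocalization.exists_smul_mem_span_of_finite_diff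
    (nonZeroDivisors S) (L := F) hTBfin (by simp [hBsp])
  exact hB.of_smul_mem_span ⟨hCli.linearIndepOn_extend _, hTsp⟩ hs ht hBT hTB

/-- If `B` is an `S`-stable basis of `A` over `F` and `C ⊆ A` is a finite
linearly independent set, then there is a finite subset `C₁ ⊆ B` such that
`C ∪ (B \ C₁)` is an `S`-stable basis of `A` over `F` (which contains `C`). -/
theorem stmt5 {S F A : Type*} [CommRing S] [IsDomain S] [Field F] [Ring A]
    [Algebra S F] [IsFractionRing S F] [Algebra F A] [Algebra S A] [IsScalarTower S F A]
    (B : Set A) (hB : IsStableBasis S F B)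
    (C : Set A) (hCfin : C.Finite) (hCli : LinearIndependent F ((↑) : C → A)) :
    ∃ C₁ ⊆ B, C₁.Finite ∧ IsStableBasis S F (C ∪ (B \ C₁)) ∧ C ⊆ C ∪ (B \ C₁) :=
  stmt5_general B hB C hCfin hCli
end

section
/- Let B be any basis of the F-algebra A over F, let M = Σ_{b∈B} Sb, and let R = {x ∈ A : xM ⊆ M}. Then R is an S-subalgebra of A with R ∩ F = S. -/
/-!
Scalars preserve every `S`-submodule, so `S ⊆ R ∩ F`. Conversely, if `x ∈ F` lies in `R`, then
for any `b ∈ B` the element `x • b` lies in `M`, i.e. it is an `S`-combination of `B`; since `B` is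
`F`-linearly independent, comparing the coefficients of `b` shows `x ∈ S`.
-/

open Submodule

def Submodule.leftOrder {S A : Type*} [CommSemiring S] [Semiring A] [Algebra S A]
    (M : Submodule S A) : Subalgebra S A where
  carrier := {x | ∀ m ∈ M, x * m ∈ M}
  mul_mem' {a b} ha hb m hm := by
    rw [mul_assoc a b]
    exact ha _ (hb m hm)
  add_mem' {a b} ha hb m hm := by
    rw [add_mul a b]
    exact M.add_mem (ha m hm) (hb m hm)
  algebraMap_mem' s m hm := Algebra.smul_def s m ▸ M.smul_mem s hm

theorem LinearIndependent.mem_range_algebraMap_of_smul_mem_span {R K M ι : Type*}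
    [CommSemiring R] [Semiring K] [AddCommMonoid M] [Algebra R K] [Module R M] [Module K M]
    [IsScalarTower R K M] {v : ι → M} (hv : LinearIndependent K v) {x : K} {i : ι}
    (h : x • v i ∈ span R (Set.range v)) : x ∈ Set.range (algebraMap R K) := by
  obtain ⟨c, hc⟩ := Finsupp.mem_span_range_iff_exists_finsupp.mp h
  have hcoeff : c.mapRange (algebraMap R K) (map_zero _) = Finsupp.single i x :=
    hv <| by simp [Finsupp.linearCombination_apply, Finsupp.sum_mapRange_index, hc]
  exact ⟨c i, by simpa using DFunLike.congr_fun hcoeff i⟩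

theorem stmt6_general {S F A : Type*} [CommRing S] [Field F] [Ring A] [Nontrivial A]
    [Algebra S F] [Algebra F A] [Algebra S A] [IsScalarTower S F A]
    (B : Set A) (hBli : LinearIndependent F ((↑) : B → A))
    (hBsp : Submodule.span F B = ⊤) :
    ∃ R : Subalgebra S A,
      (R : Set A) = {x : A | ∀ m ∈ Submodule.span S B, x * m ∈ Submodule.span S B} ∧
      (∀ x : F, algebraMap F A x ∈ R ↔ ∃ s : S, algebraMap S F s = x) := by
  refine ⟨(span S B).leftOrder, rfl, fun x => ⟨fun hx => ?_, ?_⟩⟩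
  · obtain ⟨b, hb⟩ : B.Nonempty := Set.nonempty_iff_ne_empty.mpr fun hB => by
      simp [hB] at hBsp
    have hxb : x • b ∈ span S B := Algebra.smul_def x b ▸ hx b (subset_span hb)
    exact hBli.mem_range_algebraMap_of_smul_mem_span (i := ⟨b, hb⟩) (by simpa using hxb)
  · rintro ⟨s, rfl⟩ m hm
    rw [← IsScalarTower.algebraMap_apply, ← Algebra.smul_def]
    exact (span S B).smul_mem s hm

/-- Let `B` be any basis of the `F`-algebra `A` over `F`, `M = Σ_{b∈B} S b`
and `R = {x ∈ A | xM ⊆ M}`. Then `R` is an `S`-subalgebra of `A` with `R ∩ F = S`. -/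
theorem stmt6 {S F A : Type*} [CommRing S] [IsDomain S] [Field F] [Ring A] [Nontrivial A]
    [Algebra S F] [IsFractionRing S F] [Algebra F A] [Algebra S A] [IsScalarTower S F A]
    (hS : ¬ IsField S)
    (B : Set A) (hBli : LinearIndependent F ((↑) : B → A))
    (hBsp : Submodule.span F B = ⊤) :
    ∃ R : Subalgebra S A,
      (R : Set A) = {x : A | ∀ m ∈ Submodule.span S B, x * m ∈ Submodule.span S B} ∧
      (∀ x : F, algebraMap F A x ∈ R ↔ ∃ s : S, algebraMap S F s = x) :=
  stmt6_general B hBli hBsp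
end

section
/- Let B be an S-stable basis of the F-algebra A over F, M = Σ_{b∈B} Sb, and R = {x ∈ A : xM ⊆ M}. Then R is an S-nice subalgebra of A, i.e., R ∩ F = S and RF = A. -/
open Submodule

namespace Submodule

variable {S A : Type*} [CommSemiring S] [Semiring A] [Algebra S A]

def leftMultipliers (M : Submodule S A) : Subalgebra S A where
  carrier := {x | ∀ m ∈ M, x * m ∈ M}
  mul_mem' {x y} hx hy m hm := mul_assoc x y m ▸ hx _ (hy m hm)
  add_mem' {x y} hx hy m hm := (add_mul x y m).symm ▸ M.add_mem (hx m hm) (hy m hm)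
  algebraMap_mem' s m hm := Algebra.smul_def s m ▸ M.smul_mem s hm

theorem mem_leftMultipliers_span_of_mul_mem {s : Set A} {c : A}
    (h : ∀ b ∈ s, c * b ∈ span S s) : c ∈ (span S s).leftMultipliers :=
  fun _ hm ↦ span_le (p := (span S s).comap (LinearMap.mulLeft S c)) |>.2 h hm

end Submodule

namespace Module.Basis

variable {S K A ι : Type*} [CommSemiring S] [Semiring K] [Algebra S K] [Semiring A] [Module K A]
  [Module S A] [IsScalarTower S K A]

theorem repr_mem_rangeS_of_mem_span (b : Basis ι K A) {m : A} (hm : m ∈ span S (Set.range b))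
    (i : ι) : b.repr m i ∈ (algebraMap S K).rangeS := by
  induction hm using Submodule.span_induction with
  | mem _ hx =>
    obtain ⟨j, rfl⟩ := hx
    classical
    rw [repr_self, Finsupp.single_apply]
    split_ifs
    exacts [one_mem _, zero_mem _]
  | zero => simp
  | add _ _ _ _ hx hy => simpa using add_mem hx hy
  | smul s _ _ hx =>
    rw [← algebraMap_smul K s, map_smul, Finsupp.smul_apply, smul_eq_mul]
    exact mul_mem ⟨s, rfl⟩ hx

end Module.Basis

theorem algebraMap_mem_leftMultipliers_span_iff {S K A ι : Type*} [CommSemiring S] [CommSemiring K]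
    [Algebra S K] [Semiring A] [Algebra K A] [Algebra S A] [IsScalarTower S K A] [Nonempty ι]
    (b : Module.Basis ι K A) (x : K) :
    algebraMap K A x ∈ (span S (Set.range b)).leftMultipliers ↔ x ∈ Set.range (algebraMap S K) := by
  constructor
  · intro hx
    let i := Classical.arbitrary ι
    have hxb : x • b i ∈ span S (Set.range b) :=
      Algebra.smul_def x (b i) ▸ hx _ (subset_span ⟨i, rfl⟩)
    simpa using b.repr_mem_rangeS_of_mem_span hxb i
  · rintro ⟨s, rfl⟩
    rw [← IsScalarTower.algebraMap_apply]
    exact Subalgebra.algebraMap_mem _ s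

namespace IsBasisSet

variable {F A : Type*} [Field F] [Ring A] [Algebra F A] {B : Set A}

noncomputable def basis (hB : IsBasisSet F B) : Module.Basis B F A :=
  .mk hB.1 (by rw [Subtype.range_coe]; exact hB.2.ge)

theorem range_basis (hB : IsBasisSet F B) : Set.range hB.basis = B := by
  simp [basis, Module.Basis.coe_mk]

end IsBasisSet

theorem stmt9_general {S F A : Type*} [CommRing S] [Field F] [Ring A] [Nontrivial A]
    [Algebra S F] [Algebra F A] [Algebra S A] [IsScalarTower S F A]
    (B : Set A) (hB : IsStableBasis S F B) :
    ∃ R : Subalgebra S A,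
      (R : Set A) = {x : A | ∀ m ∈ Submodule.span S B, x * m ∈ Submodule.span S B} ∧
      (∀ x : F, algebraMap F A x ∈ R ↔ ∃ s : S, algebraMap S F s = x) ∧
      Submodule.span F (R : Set A) = ⊤ := by
  obtain ⟨hBasis, C, hC, hCB⟩ := hB
  have : Nonempty B := hBasis.basis.index_nonempty
  refine ⟨(span S B).leftMultipliers, rfl, fun x ↦ ?_, ?_⟩
  · simpa only [hBasis.range_basis, Set.mem_range] using
      algebraMap_mem_leftMultipliers_span_iff hBasis.basis x
  · rw [eq_top_iff, ← hC.2]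
    exact span_mono fun c hc ↦ mem_leftMultipliers_span_of_mul_mem (hCB c hc)

/-- If `B` is an `S`-stable basis of `A` over `F`, `M = Σ_{b∈B} S b` and
`R = {x ∈ A | xM ⊆ M}`, then `R` is an `S`-nice subalgebra of `A`: `R ∩ F = S` and
`RF = A` (the `F`-span of `R` is `A`). -/
theorem stmt9 {S F A : Type*} [CommRing S] [IsDomain S] [Field F] [Ring A] [Nontrivial A]
    [Algebra S F] [IsFractionRing S F] [Algebra F A] [Algebra S A] [IsScalarTower S F A]
    (hS : ¬ IsField S)
    (B : Set A) (hB : IsStableBasis S F B) :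
    ∃ R : Subalgebra S A,
      (R : Set A) = {x : A | ∀ m ∈ Submodule.span S B, x * m ∈ Submodule.span S B} ∧
      (∀ x : F, algebraMap F A x ∈ R ↔ ∃ s : S, algebraMap S F s = x) ∧
      Submodule.span F (R : Set A) = ⊤ :=
  stmt9_general B hB
end

section
/- If the F-algebra A has an S-stable basis over F, then there exists an S-nice subalgebra of A (an S-subalgebra R with R ∩ F = S and RF = A). -/
open Submodule

def Submodule.mulStabilizer {R A : Type*} [CommSemiring R] [Semiring A] [Algebra R A]
    (M : Submodule R A) : Subalgebra R A where
  carrier := {a | ∀ m ∈ M, a * m ∈ M}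
  mul_mem' ha hb m hm := by
    rw [mul_assoc]
    exact ha _ (hb m hm)
  add_mem' ha hb m hm := by
    rw [add_mul]
    exact M.add_mem (ha m hm) (hb m hm)
  algebraMap_mem' r m hm := by
    rw [← Algebra.smul_def]
    exact M.smul_mem r hm

section Stabilizer

variable {R A : Type*} [CommSemiring R] [Semiring A] [Algebra R A]

theorem Submodule.mem_mulStabilizer_span {s : Set A} {a : A} :
    a ∈ (span R s).mulStabilizer ↔ ∀ b ∈ s, a * b ∈ span R s := by
  refine ⟨fun ha b hb => ha b (subset_span hb), fun ha => ?_⟩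
  have : span R s ≤ (span R s).comap (LinearMap.mulLeft R a) := span_le.mpr ha
  exact fun m hm => this hm

end Stabilizer

theorem Module.Basis.repr_mem_range_algebraMap_of_mem_span {R K M ι : Type*} [CommSemiring R]
    [CommSemiring K] [Algebra R K] [AddCommMonoid M] [Module K M] [Module R M]
    [IsScalarTower R K M] (b : Module.Basis ι K M) {m : M} (hm : m ∈ span R (Set.range b))
    (i : ι) : b.repr m i ∈ Set.range (algebraMap R K) := by
  classical
  have : span R (Set.range b) ≤
      (LinearMap.range (Algebra.linearMap R K)).comap ((b.coord i).restrictScalars R) := by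
    rw [span_le]
    rintro _ ⟨j, rfl⟩
    by_cases hij : j = i
    · exact ⟨1, by simp [hij]⟩
    · exact ⟨0, by simp [hij]⟩
  exact this hm

theorem Module.Basis.algebraMap_mem_mulStabilizer_span_iff (R : Type*) {K A ι : Type*}
    [CommSemiring R] [CommSemiring K] [Semiring A] [Nontrivial A] [Algebra R K] [Algebra K A]
    [Algebra R A] [IsScalarTower R K A] (b : Module.Basis ι K A) (x : K) :
    algebraMap K A x ∈ (span R (Set.range b)).mulStabilizer ↔
      x ∈ Set.range (algebraMap R K) := by
  constructor
  · intro hx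
    obtain ⟨i⟩ := b.index_nonempty
    have hxb : x • b i ∈ span R (Set.range b) := by
      rw [Algebra.smul_def]
      exact hx _ (subset_span ⟨i, rfl⟩)
    simpa using b.repr_mem_range_algebraMap_of_mem_span hxb i
  · rintro ⟨r, rfl⟩
    rw [← IsScalarTower.algebraMap_apply]
    exact Subalgebra.algebraMap_mem _ r

section BasisSet

variable {F A : Type*} [Field F] [Ring A] [Algebra F A] {B : Set A}

noncomputable def IsBasisSet.basis_s10 (hB : IsBasisSet F B) : Module.Basis B F A :=
  .mk hB.1 (by simpa using hB.2.ge)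

theorem IsBasisSet.range_basis_s10 (hB : IsBasisSet F B) : Set.range hB.basis_s10 = B := by
  simp [IsBasisSet.basis_s10]

end BasisSet

theorem stmt10_general {S F A : Type*} [CommRing S] [Field F] [Ring A] [Nontrivial A]
    [Algebra S F] [Algebra F A] [Algebra S A] [IsScalarTower S F A]
    (hstable : ∃ B : Set A, IsStableBasis S F B) :
    ∃ R : Subalgebra S A,
      (∀ x : F, algebraMap F A x ∈ R ↔ ∃ s : S, algebraMap S F s = x) ∧
      Submodule.span F (R : Set A) = ⊤ := by
  obtain ⟨B, hB, C, hC, hCB⟩ := hstable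
  refine ⟨(span S B).mulStabilizer, fun x => ?_, ?_⟩
  · simpa [hB.range_basis_s10] using hB.basis_s10.algebraMap_mem_mulStabilizer_span_iff S x
  · rw [eq_top_iff, ← hC.2]
    exact span_mono fun c hc => mem_mulStabilizer_span.mpr (hCB c hc)

/-- If the `F`-algebra `A` has an `S`-stable basis over `F`, then there
exists an `S`-nice subalgebra of `A`: an `S`-subalgebra `R` with `R ∩ F = S` and `RF = A`. -/
theorem stmt10 {S F A : Type*} [CommRing S] [IsDomain S] [Field F] [Ring A] [Nontrivial A]
    [Algebra S F] [IsFractionRing S F] [Algebra F A] [Algebra S A] [IsScalarTower S F A]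
    (hS : ¬ IsField S)
    (hstable : ∃ B : Set A, IsStableBasis S F B) :
    ∃ R : Subalgebra S A,
      (∀ x : F, algebraMap F A x ∈ R ↔ ∃ s : S, algebraMap S F s = x) ∧
      Submodule.span F (R : Set A) = ⊤ :=
  stmt10_general hstable
end

section
/- Every finite-dimensional F-algebra A admits an S-nice subalgebra: an S-subalgebra R with R ∩ F = S and RF = A. -/
/-!
Choose an `F`-basis `b` of `A` containing `1` and clear the denominators of its structure
constants by a single `d ∈ S`, so that `d • (b i * b j)` has all coordinates in `S`. Then the
`S`-span of `1` and the `d • b i` is closed under multiplication, hence an `S`-subalgebra, and it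
spans `A` over `F`. It lies inside the `S`-span of `b`, where an element of `F` can only occur
with coordinate in `S` at the basis vector `1`; so it meets `F` exactly in `S`.
-/

open Set Submodule
open scoped Pointwise

section Semiring

variable {R A ι : Type*} [CommSemiring R] [Semiring A] [Algebra R A]

theorem Submodule.mul_mem_span_of_mul_subset {s : Set A} (hs : s * s ⊆ span R s) {x y : A}
    (hx : x ∈ span R s) (hy : y ∈ span R s) : x * y ∈ span R s :=
  span_le.mpr hs (span_mul_span R s s ▸ mul_mem_mul hx hy)

theorem Submodule.insert_one_mul_subset_span {t : Set A} (ht : t * t ⊆ span R t) :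
    insert 1 t * insert 1 t ⊆ span R (insert 1 t) := by
  rintro _ ⟨x, hx, y, hy, rfl⟩
  obtain rfl | hx := hx
  · simpa using subset_span hy
  obtain rfl | hy := hy
  · simpa using subset_span (mem_insert_of_mem _ hx)
  exact span_mono (subset_insert _ _) (ht ⟨x, hx, y, hy, rfl⟩)

theorem Submodule.smul_mul_smul_mem_span (v : ι → A) {r : R}
    (hr : ∀ i j, r • (v i * v j) ∈ span R (range v)) (i j : ι) :
    r • v i * r • v j ∈ span R (range fun k => r • v k) := by
  rw [smul_mul_smul_comm, mul_smul, ← smul_set_range, span_smul]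
  exact smul_mem_pointwise_smul _ _ _ (hr i j)

namespace Subalgebra

def scaledOrder (v : ι → A) {r : R} (hr : ∀ i j, r • (v i * v j) ∈ span R (range v)) :
    Subalgebra R A :=
  (span R (insert 1 (range fun i => r • v i))).toSubalgebra (subset_span (mem_insert _ _))
    fun _ _ => mul_mem_span_of_mul_subset <| insert_one_mul_subset_span <| by
      rintro _ ⟨_, ⟨i, rfl⟩, _, ⟨j, rfl⟩, rfl⟩
      exact smul_mul_smul_mem_span v hr i j

theorem smul_mem_scaledOrder {v : ι → A} {r : R}
    (hr : ∀ i j, r • (v i * v j) ∈ span R (range v)) (i : ι) :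
    r • v i ∈ scaledOrder v hr :=
  subset_span (mem_insert_of_mem _ ⟨i, rfl⟩)

theorem scaledOrder_le_span {v : ι → A} {r : R}
    (hr : ∀ i j, r • (v i * v j) ∈ span R (range v)) {i₀ : ι} (hi₀ : v i₀ = 1) :
    toSubmodule (scaledOrder v hr) ≤ span R (range v) := by
  refine span_le.mpr (insert_subset (hi₀ ▸ subset_span ⟨i₀, rfl⟩) ?_)
  rintro _ ⟨i, rfl⟩
  exact Submodule.smul_mem _ r (subset_span ⟨i, rfl⟩)

end Subalgebra

end Semiring

namespace Module.Basis

variable {S F A ι : Type*} [CommRing S] [Field F] [Ring A] [Algebra S F]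
  [Algebra F A] [Algebra S A] [IsScalarTower S F A]

theorem algebraMap_mem_span_iff [IsDomain S] [Module.IsTorsionFree S F] (b : Basis ι F A)
    {i₀ : ι} (hi₀ : b i₀ = 1) (x : F) :
    algebraMap F A x ∈ span S (range b) ↔ x ∈ range (algebraMap S F) := by
  classical
  have hrepr : b.repr (algebraMap F A x) = Finsupp.single i₀ x := by
    rw [Algebra.algebraMap_eq_smul_one, ← hi₀, map_smul, repr_self, Finsupp.smul_single_one]
  rw [mem_span_iff_repr_mem, hrepr]
  refine ⟨fun h => by simpa using h i₀, fun hx i => ?_⟩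
  rw [Finsupp.single_apply]
  split_ifs
  exacts [hx, ⟨0, map_zero _⟩]

theorem exists_smul_mul_mem_span [IsDomain S] [IsFractionRing S F] [Finite ι] (b : Basis ι F A) :
    ∃ d : S, d ≠ 0 ∧ ∀ i j, d • (b i * b j) ∈ span S (range b) := by
  obtain ⟨d, hd⟩ := IsLocalization.exist_integer_multiples_of_finite (nonZeroDivisors S)
    fun p : ι × ι × ι => b.repr (b p.1 * b p.2.1) p.2.2
  refine ⟨d, nonZeroDivisors.coe_ne_zero d, fun i j => (mem_span_iff_repr_mem S b _).mpr
    fun k => ?_⟩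
  rw [LinearMapClass.map_smul_of_tower, Finsupp.smul_apply]
  exact hd (i, j, k)

theorem algebraMap_mem_scaledOrder_iff [IsDomain S] [Module.IsTorsionFree S F] (b : Basis ι F A) {d : S}
    (hd : ∀ i j, d • (b i * b j) ∈ span S (range b)) {i₀ : ι} (hi₀ : b i₀ = 1) (x : F) :
    algebraMap F A x ∈ Subalgebra.scaledOrder b hd ↔ x ∈ range (algebraMap S F) := by
  refine ⟨fun hx => (b.algebraMap_mem_span_iff hi₀ x).mp
    (Subalgebra.scaledOrder_le_span hd hi₀ hx), ?_⟩
  rintro ⟨s, rfl⟩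
  rw [← IsScalarTower.algebraMap_apply]
  exact Subalgebra.algebraMap_mem _ s

theorem span_scaledOrder [FaithfulSMul S F] (b : Basis ι F A) {d : S} (hd0 : d ≠ 0)
    (hd : ∀ i j, d • (b i * b j) ∈ span S (range b)) :
    span F (Subalgebra.scaledOrder b hd : Set A) = ⊤ := by
  have hd0' : algebraMap S F d ≠ 0 :=
    (map_ne_zero_iff _ (FaithfulSMul.algebraMap_injective S F)).mpr hd0
  rw [eq_top_iff, ← b.span_eq, span_le]
  rintro _ ⟨i, rfl⟩
  rw [← inv_smul_smul₀ hd0' (b i), algebraMap_smul]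
  exact smul_mem _ _ (subset_span (Subalgebra.smul_mem_scaledOrder hd i))

end Module.Basis

theorem stmt11_general {S F A : Type*} [CommRing S] [IsDomain S] [Field F] [Ring A] [Nontrivial A]
    [Algebra S F] [IsFractionRing S F] [Algebra F A] [Algebra S A] [IsScalarTower S F A]
    [FiniteDimensional F A] :
    ∃ R : Subalgebra S A,
      (∀ x : F, algebraMap F A x ∈ R ↔ ∃ s : S, algebraMap S F s = x) ∧
      Submodule.span F (R : Set A) = ⊤ := by
  have hone : LinearIndepOn F id ({1} : Set A) := (linearIndepOn_singleton_iff F).mpr one_ne_zero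
  let b := Module.Basis.extend hone
  have := Module.Finite.finite_basis b
  obtain ⟨i₀, hi₀⟩ : (1 : A) ∈ range b := by
    rw [Module.Basis.range_extend]
    exact hone.subset_extend _ rfl
  obtain ⟨d, hd0, hd⟩ := b.exists_smul_mul_mem_span (S := S)
  exact ⟨Subalgebra.scaledOrder b hd, b.algebraMap_mem_scaledOrder_iff hd hi₀,
    b.span_scaledOrder hd0 hd⟩

/-- Every finite-dimensional `F`-algebra `A` admits an `S`-nice subalgebra:
an `S`-subalgebra `R` with `R ∩ F = S` and `RF = A`. -/
theorem stmt11 {S F A : Type*} [CommRing S] [IsDomain S] [Field F] [Ring A] [Nontrivial A]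
    [Algebra S F] [IsFractionRing S F] [Algebra F A] [Algebra S A] [IsScalarTower S F A]
    [FiniteDimensional F A]
    (hS : ¬ IsField S) :
    ∃ R : Subalgebra S A,
      (∀ x : F, algebraMap F A x ∈ R ↔ ∃ s : S, algebraMap S F s = x) ∧
      Submodule.span F (R : Set A) = ⊤ :=
  stmt11_general
end

section
/- Let I be a proper two-sided ideal of the F-algebra A, and suppose there is a basis B_1 of I over F that is contained in some S-stable basis B of A over F. Then there exists an S-nice subalgebra R of A with I an ideal of R. -/
/-!
Let `N = S·B + I`, an `S`-submodule of `A`, and let `R = {a ∈ A | a N ⊆ N}`, an `S`-subalgebra.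
Since `I` is an ideal, `R` contains `I` and every `c` with `c B ⊆ S·B`; in particular it contains
the `F`-basis `C`, so `R F = A`. Conversely, if `x ∈ F` lies in `R` then `x b₀ ∈ N` for some
`b₀ ∈ B \ B₁` (which exists as `I ≠ A`), and the `b₀`-coordinate of an element of `N` lies in `S`,
because it vanishes on `I`; the `b₀`-coordinate of `x b₀` is `x`.
-/

open Submodule

namespace Submodule

variable {S A : Type*} [CommSemiring S] [Semiring A] [Algebra S A]

def leftStabilizer (N : Submodule S A) : Subalgebra S A where
  carrier := {a | ∀ n ∈ N, a * n ∈ N}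
  mul_mem' ha hb n hn := by rw [mul_assoc]; exact ha _ (hb n hn)
  one_mem' n hn := by rwa [one_mul]
  add_mem' ha hb n hn := by rw [add_mul]; exact N.add_mem (ha n hn) (hb n hn)
  zero_mem' n _ := by rw [zero_mul]; exact N.zero_mem
  algebraMap_mem' s n hn := by rw [← Algebra.smul_def]; exact N.smul_mem s hn

theorem mem_leftStabilizer {N : Submodule S A} {a : A} :
    a ∈ N.leftStabilizer ↔ ∀ n ∈ N, a * n ∈ N :=
  Iff.rfl

theorem mem_leftStabilizer_span {B : Set A} {a : A} :
    a ∈ (span S B).leftStabilizer ↔ ∀ b ∈ B, a * b ∈ span S B :=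
  ⟨fun ha b hb => ha b (subset_span hb),
    fun ha _ hn => (span_le (p := (span S B).comap (LinearMap.mulLeft S a))).mpr ha hn⟩

theorem leftStabilizer_le_leftStabilizer_sup (M : Submodule S A) {J : Submodule S A}
    (hJ : ∀ x : A, ∀ j ∈ J, x * j ∈ J) : M.leftStabilizer ≤ (M ⊔ J).leftStabilizer := by
  intro a ha n hn
  obtain ⟨m, hm, j, hj, rfl⟩ := mem_sup.mp hn
  rw [mul_add]
  exact add_mem_sup (ha m hm) (hJ a j hj)

end Submodule

theorem apply_mem_range_algebraMap_of_mem_span_sup {S F A : Type*} [CommSemiring S] [Field F]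
    [Ring A] [Algebra S F] [Algebra F A] [Module S A] [IsScalarTower S F A]
    (φ : A →ₗ[F] F) {B : Set A}
    {J : Submodule F A} (hB : ∀ b ∈ B, φ b ∈ Set.range (algebraMap S F))
    (hJ : J ≤ LinearMap.ker φ) {a : A} (ha : a ∈ span S B ⊔ J.restrictScalars S) :
    φ a ∈ Set.range (algebraMap S F) := by
  let P : Submodule S A := (LinearMap.range (Algebra.linearMap S F)).comap (φ.restrictScalars S)
  have hBP : span S B ≤ P := span_le.mpr hB
  have hJP : J.restrictScalars S ≤ P := fun x hx => ⟨0, by simpa using (hJ hx).symm⟩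
  exact sup_le hBP hJP ha

theorem IsBasisSet.exists_coord {F A : Type*} [Field F] [Ring A] [Algebra F A] {B : Set A}
    (hB : IsBasisSet F B) {b₀ : A} (hb₀ : b₀ ∈ B) :
    ∃ φ : A →ₗ[F] F, φ b₀ = 1 ∧ ∀ b ∈ B, b ≠ b₀ → φ b = 0 := by
  let bB : Module.Basis B F A := Module.Basis.mk hB.1 (by simp [hB.2])
  have hcoord (b : A) (hb : b ∈ B) :
      bB.coord ⟨b₀, hb₀⟩ b = Finsupp.single (⟨b, hb⟩ : B) 1 ⟨b₀, hb₀⟩ := by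
    have hrepr := bB.repr_self ⟨b, hb⟩
    rw [Module.Basis.mk_apply] at hrepr
    rw [Module.Basis.coord_apply, hrepr]
  refine ⟨bB.coord ⟨b₀, hb₀⟩, ?_, fun b hb hne => ?_⟩
  · rw [hcoord b₀ hb₀, Finsupp.single_eq_same]
  · rw [hcoord b hb, Finsupp.single_eq_of_ne (by simpa [Subtype.ext_iff, eq_comm] using hne)]

theorem stmt12_general {S F A : Type*} [CommRing S] [Field F] [Ring A]
    [Algebra S F] [Algebra F A] [Algebra S A] [IsScalarTower S F A]
    (I : Submodule F A) (hIideal : ∀ a ∈ I, ∀ x : A, x * a ∈ I ∧ a * x ∈ I) (hIne : I ≠ ⊤)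
    (B₁ B : Set A) (hB₁B : B₁ ⊆ B)
    (hB₁sp : Submodule.span F B₁ = I)
    (hB : IsStableBasis S F B) :
    ∃ R : Subalgebra S A,
      (∀ x : F, algebraMap F A x ∈ R ↔ ∃ s : S, algebraMap S F s = x) ∧
      Submodule.span F (R : Set A) = ⊤ ∧
      (I : Set A) ⊆ (R : Set A) ∧
      (∀ r ∈ R, ∀ a ∈ I, r * a ∈ I ∧ a * r ∈ I) := by
  obtain ⟨hBbasis, C, ⟨-, hCsp⟩, hCB⟩ := hB
  obtain ⟨b₀, hb₀B, hb₀B₁⟩ : ∃ b ∈ B, b ∉ B₁ := by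
    by_contra! hBB₁
    exact hIne (top_unique (hBbasis.2 ▸ hB₁sp ▸ span_mono hBB₁))
  obtain ⟨φ, hφb₀, hφB⟩ := hBbasis.exists_coord hb₀B
  let N : Submodule S A := span S B ⊔ I.restrictScalars S
  have hCR : C ⊆ N.leftStabilizer := fun c hc =>
    leftStabilizer_le_leftStabilizer_sup (span S B) (J := I.restrictScalars S)
      (fun x a ha => (hIideal a ha x).1) (mem_leftStabilizer_span.mpr (hCB c hc))
  refine ⟨N.leftStabilizer, fun x => ⟨fun hx => ?_, ?_⟩,
    top_unique (hCsp ▸ span_mono hCR),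
    fun a ha => mem_leftStabilizer.mpr fun n _ => mem_sup_right (hIideal a ha n).2,
    fun r _ a ha => hIideal a ha r⟩
  · have hxb₀ : x • b₀ ∈ N := by
      rw [Algebra.smul_def]; exact mem_leftStabilizer.mp hx b₀ (mem_sup_left (subset_span hb₀B))
    have hφI : I ≤ LinearMap.ker φ := hB₁sp ▸ span_le.mpr fun b hb =>
      hφB b (hB₁B hb) (ne_of_mem_of_not_mem hb hb₀B₁)
    have hφN := apply_mem_range_algebraMap_of_mem_span_sup φ
      (fun b hb => by
        by_cases h : b = b₀
        · exact ⟨1, by rw [h, hφb₀, map_one]⟩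
        · exact ⟨0, by rw [hφB b hb h, map_zero]⟩) hφI hxb₀
    simpa [hφb₀] using hφN
  · rintro ⟨s, rfl⟩
    rw [← IsScalarTower.algebraMap_apply]
    exact N.leftStabilizer.algebraMap_mem s

/-- Let `I` be a proper two-sided ideal of the `F`-algebra `A` (an
`F`-subspace closed under left and right multiplication by `A`) admitting an `F`-basis
`B₁` contained in some `S`-stable basis `B` of `A` over `F`. Then there is an `S`-nice
subalgebra `R` of `A` (`R ∩ F = S`, `RF = A`) containing `I` as a two-sided ideal. -/
theorem stmt12 {S F A : Type*} [CommRing S] [IsDomain S] [Field F] [Ring A] [Nontrivial A]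
    [Algebra S F] [IsFractionRing S F] [Algebra F A] [Algebra S A] [IsScalarTower S F A]
    (hS : ¬ IsField S)
    (I : Submodule F A) (hIideal : ∀ a ∈ I, ∀ x : A, x * a ∈ I ∧ a * x ∈ I) (hIne : I ≠ ⊤)
    (B₁ B : Set A) (hB₁B : B₁ ⊆ B)
    (hB₁li : LinearIndependent F ((↑) : B₁ → A)) (hB₁sp : Submodule.span F B₁ = I)
    (hB : IsStableBasis S F B) :
    ∃ R : Subalgebra S A,
      (∀ x : F, algebraMap F A x ∈ R ↔ ∃ s : S, algebraMap S F s = x) ∧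
      Submodule.span F (R : Set A) = ⊤ ∧
      (I : Set A) ⊆ (R : Set A) ∧
      (∀ r ∈ R, ∀ a ∈ I, r * a ∈ I ∧ a * r ∈ I) :=
  stmt12_general I hIideal hIne B₁ B hB₁B hB₁sp hB
end

section
/- Suppose the F-algebra A ≠ F has an S-stable basis over F. Then for every S-nice subalgebra R of A there exists an S-nice subalgebra R' of A with R' strictly contained in R. Consequently there is an infinite strictly decreasing chain of S-nice subalgebras of A, and no minimal S-nice subalgebra exists. -/
/-- `R` is an `S`-nice subalgebra of `A`: `R ∩ F = S` and `RF = A`. -/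
def IsNice (S F : Type*) {A : Type*} [CommRing S] [Field F] [Ring A]
    [Algebra S F] [Algebra F A] [Algebra S A] [IsScalarTower S F A]
    (R : Subalgebra S A) : Prop :=
  (∀ x : F, algebraMap F A x ∈ R ↔ ∃ s : S, algebraMap S F s = x) ∧
    Submodule.span F (R : Set A) = ⊤

/-!
Let `D` be the ring of left multipliers of the `S`-lattice spanned by the stable basis `B`. It
contains the `S`-span of `C`, so `R ∩ D` still spans `A` over `F`. The functionals
`a ↦ [a b]_{b'}` (coordinates of `a b` in the basis) are `S`-valued on `D`, and since `A ≠ F`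
one of `[· b]_{b'}` with `b ≠ b'` or `[· b]_b - [· b']_{b'}` is a nonzero functional `ψ` with
`ψ 1 = 0`. Take `r ∈ R` with `ψ r ≠ 0` and, as `S` is not a field, a nonzero `s ∈ S` with
`ψ r ∉ s S`. Then `S + s (R ∩ D)` is `S`-nice and contained in `R`, but misses `r` because `ψ`
maps it into `s S`.
-/

open Submodule

namespace Subalgebra

variable {S A : Type*} [CommSemiring S] [Semiring A] [Algebra S A]

def leftMultipliers (M : Submodule S A) : Subalgebra S A where
  carrier := {a | ∀ m ∈ M, a * m ∈ M}
  mul_mem' ha hb m hm := by rw [mul_assoc]; exact ha _ (hb m hm)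
  add_mem' ha hb m hm := by rw [add_mul]; exact M.add_mem (ha m hm) (hb m hm)
  algebraMap_mem' t m hm := by rw [← Algebra.smul_def]; exact M.smul_mem t hm

theorem span_le_leftMultipliers {B C : Set A} (hCB : ∀ c ∈ C, ∀ b ∈ B, c * b ∈ span S B) :
    span S C ≤ Subalgebra.toSubmodule (leftMultipliers (span S B)) := by
  refine span_le.mpr fun c hc m hm => ?_
  induction hm using span_induction with
  | mem b hb => exact hCB c hc b hb
  | zero => simp
  | add u v _ _ hu hv => rw [mul_add]; exact add_mem hu hv
  | smul t u _ hu => rw [mul_smul_comm]; exact (span S B).smul_mem t hu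

/-- The subalgebra `S + s T`. -/
def baseAddSmul (T : Subalgebra S A) (s : S) : Subalgebra S A where
  carrier := {x | ∃ t : S, ∃ e ∈ T, algebraMap S A t + s • e = x}
  algebraMap_mem' t := ⟨t, 0, T.zero_mem, by simp⟩
  add_mem' := by
    rintro _ _ ⟨t, e, he, rfl⟩ ⟨t', f, hf, rfl⟩
    exact ⟨t + t', e + f, T.add_mem he hf, by rw [map_add, smul_add]; abel⟩
  mul_mem' := by
    rintro _ _ ⟨t, e, he, rfl⟩ ⟨t', f, hf, rfl⟩
    refine ⟨t * t', t • f + t' • e + s • (e * f),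
      add_mem (add_mem (T.smul_mem hf t) (T.smul_mem he t')) (T.smul_mem (T.mul_mem he hf) s), ?_⟩
    simp only [Algebra.algebraMap_eq_smul_one, add_mul, mul_add, smul_mul_assoc, mul_smul_comm,
      one_mul, mul_one, smul_add, smul_smul]
    module

theorem baseAddSmul_le {T R : Subalgebra S A} (hTR : T ≤ R) (s : S) : T.baseAddSmul s ≤ R := by
  rintro _ ⟨t, e, he, rfl⟩
  exact add_mem (R.algebraMap_mem t) (R.smul_mem (hTR he) s)

theorem notMem_baseAddSmul {F : Type*} [CommSemiring F] [Algebra S F] {T : Subalgebra S A}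
    {ψ : A →ₗ[S] F} (hψ1 : ψ 1 = 0) (hψT : ∀ e ∈ T, ψ e ∈ Set.range (algebraMap S F))
    {s : S} {r : A} (hr : ∀ u : S, algebraMap S F (s * u) ≠ ψ r) : r ∉ T.baseAddSmul s := by
  rintro ⟨t, e, he, rfl⟩
  obtain ⟨u, hu⟩ := hψT e he
  have hψt : ψ (algebraMap S A t) = 0 := by
    rw [Algebra.algebraMap_eq_smul_one, map_smul, hψ1, smul_zero]
  apply hr u
  rw [map_add, hψt, zero_add, map_smul, ← hu, Algebra.smul_def, map_mul]

end Subalgebra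

theorem exists_ne_zero_forall_mul_ne {S F : Type*} [CommRing S] [IsDomain S] [CommRing F]
    [Algebra S F] (hinj : Function.Injective (algebraMap S F)) (hS : ¬IsField S) {w : F}
    (hw : w ≠ 0) : ∃ s : S, s ≠ 0 ∧ ∀ u : S, algebraMap S F (s * u) ≠ w := by
  obtain ⟨s₀, hs₀, hs₀u⟩ := Ring.exists_not_isUnit_of_not_isField hS
  by_cases hwS : w ∈ Set.range (algebraMap S F)
  · obtain ⟨t, rfl⟩ := hwS
    have ht : t ≠ 0 := by rintro rfl; exact hw (map_zero _)
    refine ⟨t * s₀, mul_ne_zero ht hs₀, fun u h => hs₀u (.of_mul_eq_one u ?_)⟩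
    exact mul_left_cancel₀ ht (by rw [← mul_assoc, mul_one]; exact hinj h)
  · exact ⟨s₀, hs₀, fun u h => hwS ⟨_, h⟩⟩

namespace Module.Basis

variable {ι F A : Type*} [Field F] [Ring A] [Algebra F A] (b : Basis ι F A)

noncomputable def mulCoord (i j : ι) : A →ₗ[F] F :=
  b.coord j ∘ₗ LinearMap.mulRight F (b i)

theorem mulCoord_apply (i j : ι) (a : A) : b.mulCoord i j a = b.repr (a * b i) j :=
  rfl

theorem mulCoord_one [DecidableEq ι] (i j : ι) : b.mulCoord i j 1 = if i = j then 1 else 0 := by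
  rw [mulCoord_apply, one_mul, repr_self, Finsupp.single_apply]

theorem mem_range_algebraMap_of_mulCoord {a : A} (hoff : ∀ i j, i ≠ j → b.mulCoord i j a = 0)
    (hdiag : ∀ i j, b.mulCoord i i a = b.mulCoord j j a) : a ∈ Set.range (algebraMap F A) := by
  classical
  cases subsingleton_or_nontrivial A with
  | inl hA => exact ⟨0, Subsingleton.elim _ _⟩
  | inr hA => ?_
  obtain ⟨i₀⟩ := b.index_nonempty
  refine ⟨b.mulCoord i₀ i₀ a, ?_⟩
  have hmul : LinearMap.mulLeft F a = b.mulCoord i₀ i₀ a • LinearMap.id := by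
    refine b.ext fun i => b.ext_elem fun j => ?_
    rw [LinearMap.mulLeft_apply, LinearMap.smul_apply, LinearMap.id_apply, map_smul, repr_self,
      Finsupp.smul_apply, Finsupp.single_apply, ← mulCoord_apply]
    split_ifs with h
    · rw [h, hdiag j i₀, smul_eq_mul, mul_one]
    · rw [hoff i j h, smul_zero]
  simpa [Algebra.algebraMap_eq_smul_one] using (LinearMap.congr_fun hmul 1).symm

end Module.Basis

section FractionField

variable {S F A : Type*} [CommRing S] [Field F] [Ring A] [Algebra S F] [IsFractionRing S F]
  [Algebra F A] [Algebra S A] [IsScalarTower S F A]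

theorem span_eq_top_iff_forall_exists_smul_mem (N : Submodule S A) :
    span F (N : Set A) = ⊤ ↔ ∀ a : A, ∃ d ∈ nonZeroDivisors S, d • a ∈ N := by
  constructor
  · intro h a
    obtain ⟨⟨d, hd⟩, hda⟩ := multiple_mem_span_of_mem_localization_span (nonZeroDivisors S) F
      (N : Set A) a (h ▸ mem_top)
    exact ⟨d, hd, by simpa using hda⟩
  · intro h
    refine eq_top_iff'.mpr fun a => ?_
    obtain ⟨d, hd, hda⟩ := h a
    have hd' : algebraMap S F d ≠ 0 := (IsLocalization.map_units F ⟨d, hd⟩).ne_zero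
    rw [← inv_smul_smul₀ hd' a, algebraMap_smul]
    exact Submodule.smul_mem _ _ (subset_span hda)

theorem span_inf_eq_top {N N' : Submodule S A} (h : span F (N : Set A) = ⊤)
    (h' : span F (N' : Set A) = ⊤) : span F ((N ⊓ N' : Submodule S A) : Set A) = ⊤ := by
  rw [span_eq_top_iff_forall_exists_smul_mem] at h h' ⊢
  intro a
  obtain ⟨d, hd, hda⟩ := h a
  obtain ⟨d', hd', hda'⟩ := h' a
  refine ⟨d * d', mul_mem hd hd', ?_, ?_⟩
  · rw [mul_comm, mul_smul]; exact N.smul_mem d' hda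
  · rw [mul_smul]; exact N'.smul_mem d hda'

theorem Subalgebra.isNice_baseAddSmul {R T : Subalgebra S A} (hR : IsNice S F R) (hTR : T ≤ R)
    (hT : span F (T : Set A) = ⊤) {s : S} (hs : s ≠ 0) : IsNice S F (T.baseAddSmul s) := by
  have hs' : algebraMap S F s ≠ 0 := (map_ne_zero_iff _ (IsFractionRing.injective S F)).mpr hs
  refine ⟨fun x => ⟨?_, ?_⟩, ?_⟩
  · rintro ⟨t, e, he, hx⟩
    have hse : algebraMap S F s • e = algebraMap F A (x - algebraMap S F t) := by
      rw [algebraMap_smul, map_sub, ← IsScalarTower.algebraMap_apply, ← hx, add_sub_cancel_left]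
    have he' : e = algebraMap F A ((algebraMap S F s)⁻¹ * (x - algebraMap S F t)) := by
      rw [map_mul, ← Algebra.smul_def, ← hse, inv_smul_smul₀ hs']
    obtain ⟨u, hu⟩ := (hR.1 _).1 (hTR (he' ▸ he))
    refine ⟨t + s * u, ?_⟩
    rw [map_add, map_mul, hu]
    field_simp
    ring
  · rintro ⟨t, rfl⟩
    exact ⟨t, 0, T.zero_mem, by rw [smul_zero, add_zero, IsScalarTower.algebraMap_apply S F A]⟩
  · refine eq_top_iff.mpr (hT ▸ span_le.mpr fun e he => ?_)
    rw [← inv_smul_smul₀ hs' e, algebraMap_smul]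
    have hse : s • e ∈ T.baseAddSmul s := ⟨0, e, he, by simp⟩
    exact Submodule.smul_mem _ _ (subset_span hse)

variable [IsDomain S]

namespace Module.Basis

variable {ι : Type*} (b : Basis ι F A)

theorem repr_mem_range_of_mem_span {m : A} (hm : m ∈ span S (Set.range b)) (i : ι) :
    b.repr m i ∈ Set.range (algebraMap S F) :=
  ⟨_, b.restrictScalars_repr_apply S ⟨m, hm⟩ i⟩

theorem mulCoord_mem_range {e : A}
    (he : e ∈ Subalgebra.leftMultipliers (span S (Set.range b))) (i j : ι) :
    b.mulCoord i j e ∈ Set.range (algebraMap S F) :=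
  b.repr_mem_range_of_mem_span (he _ (subset_span ⟨i, rfl⟩)) j

theorem exists_functional_integral_on_leftMultipliers (hA : ¬Function.Surjective (algebraMap F A)) :
    ∃ ψ : A →ₗ[F] F, ψ ≠ 0 ∧ ψ 1 = 0 ∧
      ∀ e ∈ Subalgebra.leftMultipliers (span S (Set.range b)),
        ψ e ∈ Set.range (algebraMap S F) := by
  classical
  by_contra h
  have hzero : ∀ ψ : A →ₗ[F] F, ψ 1 = 0 →
      (∀ e ∈ Subalgebra.leftMultipliers (span S (Set.range b)),
        ψ e ∈ Set.range (algebraMap S F)) → ψ = 0 :=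
    fun ψ h1 hψ => by_contra fun h0 => h ⟨ψ, h0, h1, hψ⟩
  refine hA fun a => b.mem_range_algebraMap_of_mulCoord (fun i j hij => ?_) (fun i j => ?_)
  · refine LinearMap.congr_fun (hzero _ ?_ fun e he => b.mulCoord_mem_range he i j) a
    rw [mulCoord_one, if_neg hij]
  · refine sub_eq_zero.mp (LinearMap.congr_fun (hzero (b.mulCoord i i - b.mulCoord j j) ?_ ?_) a)
    · simp [mulCoord_one]
    · intro e he
      obtain ⟨u, hu⟩ := b.mulCoord_mem_range he i i
      obtain ⟨v, hv⟩ := b.mulCoord_mem_range he j j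
      exact ⟨u - v, by rw [map_sub, hu, hv, LinearMap.sub_apply]⟩

end Module.Basis

theorem exists_isNice_lt (hS : ¬IsField S) (hA : ¬Function.Surjective (algebraMap F A))
    (hstable : ∃ B : Set A, IsStableBasis S F B) {R : Subalgebra S A} (hR : IsNice S F R) :
    ∃ R' : Subalgebra S A, IsNice S F R' ∧ R' < R := by
  obtain ⟨B, ⟨hBli, hBspan⟩, C, ⟨-, hCspan⟩, hCB⟩ := hstable
  let b : Module.Basis B F A := .mk hBli (by rw [Subtype.range_coe]; exact hBspan.ge)
  have hb : Set.range b = B := by rw [Module.Basis.coe_mk, Subtype.range_coe]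
  let D := Subalgebra.leftMultipliers (span S B)
  obtain ⟨ψ, hψ0, hψ1, hψD⟩ := b.exists_functional_integral_on_leftMultipliers (S := S) hA
  rw [hb] at hψD
  obtain ⟨r, hrR, hψr⟩ : ∃ r ∈ R, ψ r ≠ 0 := by
    by_contra! h
    exact hψ0 (LinearMap.ext_on hR.2 h)
  obtain ⟨s, hs0, hs⟩ := exists_ne_zero_forall_mul_ne (IsFractionRing.injective S F) hS hψr
  have hCD : C ⊆ D := fun c hc => Subalgebra.span_le_leftMultipliers hCB (subset_span hc)
  have hD : span F (D : Set A) = ⊤ := top_unique (hCspan ▸ span_mono hCD)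
  have hRD : span F ((R ⊓ D : Subalgebra S A) : Set A) = ⊤ :=
    span_inf_eq_top (N := Subalgebra.toSubmodule R) (N' := Subalgebra.toSubmodule D) hR.2 hD
  refine ⟨(R ⊓ D).baseAddSmul s, Subalgebra.isNice_baseAddSmul hR inf_le_left hRD hs0,
    lt_of_le_of_ne (Subalgebra.baseAddSmul_le inf_le_left s) fun h => ?_⟩
  refine Subalgebra.notMem_baseAddSmul (ψ := ψ.restrictScalars S) hψ1 ?_ hs (h ▸ hrR)
  exact fun e he => hψD e he.2

end FractionField

/-- If `A ≠ F` has an `S`-stable basis over `F`, then below every `S`-nice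
subalgebra `R` of `A` there is an infinite strictly decreasing chain of `S`-nice
subalgebras starting from `R`; in particular no minimal `S`-nice subalgebra exists. -/
theorem stmt15 {S F A : Type*} [CommRing S] [IsDomain S] [Field F] [Ring A]
    [Algebra S F] [IsFractionRing S F] [Algebra F A] [Algebra S A] [IsScalarTower S F A]
    (hS : ¬ IsField S) (hA : ¬ Function.Surjective (algebraMap F A))
    (hstable : ∃ B : Set A, IsStableBasis S F B)
    (R : Subalgebra S A) (hR : IsNice S F R) :
    (∃ f : ℕ → Subalgebra S A, f 0 = R ∧ (∀ n, IsNice S F (f n)) ∧ ∀ n, f (n + 1) < f n) ∧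
      ¬ ∃ R₀ : Subalgebra S A, IsNice S F R₀ ∧
          ∀ R' : Subalgebra S A, IsNice S F R' → ¬ R' < R₀ := by
  have hlt (P : {P : Subalgebra S A // IsNice S F P}) : ∃ Q : {Q // IsNice S F Q}, Q.1 < P.1 :=
    let ⟨Q, hQ, hQP⟩ := exists_isNice_lt hS hA hstable P.2
    ⟨⟨Q, hQ⟩, hQP⟩
  choose next hnext using hlt
  refine ⟨⟨fun n => (next^[n] ⟨R, hR⟩).1, rfl, fun n => (next^[n] ⟨R, hR⟩).2, fun n => ?_⟩, ?_⟩
  · dsimp only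
    rw [Function.iterate_succ_apply']
    exact hnext _
  · rintro ⟨R₀, h₀, hmin⟩
    obtain ⟨R', h', hR'⟩ := exists_isNice_lt hS hA hstable h₀
    exact hmin R' h' hR'
end

section
/- Let v be a valuation on F with value group Γ_v and valuation ring O_v, and let R be any O_v-algebra. Define w(0) = ∞ and, for 0 ≠ x ∈ R, w(x) to be the cut of Γ_v whose left set is v(S_x) where S_x = {a ∈ O_v : xR ⊆ aR}. Then w is a quasi-valuation on R with values in the cut monoid M(Γ_v) ∪ {∞}: w(xy) ≥ w(x) + w(y) and w(x+y) ≥ min{w(x), w(y)} for all x, y ∈ R. -/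
/-!
Since `R` has a unit, `xR ⊆ aR` just says that `a` divides `x`, so `S_x` is the set of
`a ∈ O_v` dividing `x`, and in a valuation ring divisibility is read off the values:
`a ∣ b` as soon as `v a ≤ v b`. Hence `v(S_x)` is closed downwards, divisors of `x` and `y`
multiply to divisors of `xy`, and a common value `v a = v b` of divisors of `x` and `y`
gives the common divisor `a` of both, hence of `x + y`.
-/

open Pointwise

/-- The left set `v(S_x)` of the cut `w(x)` assigned by the filter quasi-valuation:
`{γ < 0} ∪ {v(a) : a ∈ O_v, xR ⊆ aR}`, an initial subset of the value group `Γ`. -/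
def vSupp {F Γ : Type*} [Field F] [AddCommGroup Γ] [LinearOrder Γ] [IsOrderedAddMonoid Γ]
    (v : F → WithTop Γ) (O : Subring F) {R : Type*} [Ring R] [Algebra O R]
    (x : R) : Set Γ :=
  {γ : Γ | γ < 0 ∨ ∃ a : O, (∀ y : R, ∃ z : R, x * y = a • z) ∧ v (a : F) = (γ : WithTop Γ)}

theorem forall_mul_eq_smul_iff_exists_eq_smul {O R : Type*} [CommSemiring O] [Semiring R]
    [Algebra O R] {a : O} {x : R} :
    (∀ y : R, ∃ z : R, x * y = a • z) ↔ ∃ z : R, x = a • z := by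
  constructor
  · intro h
    simpa using h 1
  · rintro ⟨z, rfl⟩ y
    exact ⟨z * y, smul_mul_assoc a z y⟩

theorem ne_zero_of_valuation_eq_coe {F Γ : Type*} [Zero F] {v : F → WithTop Γ}
    (hv0 : ∀ x : F, v x = ⊤ ↔ x = 0) {b : F} {β : Γ} (hb : v b = β) : b ≠ 0 := fun h =>
  WithTop.coe_ne_top (hb.symm.trans ((hv0 b).mpr h))

section Valuation

variable {F Γ : Type*} [Field F] [AddCommGroup Γ] [LinearOrder Γ] [IsOrderedAddMonoid Γ]
  {v : F → WithTop Γ}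

theorem valuation_div_eq_sub (hvmul : ∀ x y : F, v (x * y) = v x + v y) {a b : F} {α β : Γ}
    (ha : v a = α) (hb : v b = β) (hb0 : b ≠ 0) : v (a / b) = ((α - β : Γ) : WithTop Γ) := by
  have h := hvmul (a / b) b
  rw [div_mul_cancel₀ a hb0, ha, hb] at h
  have hfin : v (a / b) ≠ ⊤ := fun htop => by
    rw [htop, top_add] at h
    exact WithTop.coe_ne_top h
  obtain ⟨q, hq⟩ := WithTop.ne_top_iff_exists.mp hfin
  rw [← hq, ← WithTop.coe_add, WithTop.coe_inj] at h
  rw [← hq, eq_sub_of_add_eq h.symm]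

theorem dvd_of_valuation_le (hv0 : ∀ x : F, v x = ⊤ ↔ x = 0)
    (hvmul : ∀ x y : F, v (x * y) = v x + v y) {O : Subring F} (hO : ∀ a : F, a ∈ O ↔ 0 ≤ v a)
    {a b : O} {α β : Γ} (ha : v a = α) (hb : v b = β) (hle : α ≤ β) : a ∣ b := by
  have ha0 : (a : F) ≠ 0 := ne_zero_of_valuation_eq_coe hv0 ha
  have hquot : (b : F) / a ∈ O := by
    rw [hO, valuation_div_eq_sub hvmul hb ha ha0]
    exact_mod_cast sub_nonneg.mpr hle
  exact ⟨⟨_, hquot⟩, Subtype.ext (mul_div_cancel₀ (b : F) ha0).symm⟩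

end Valuation

section vSupp

variable {F Γ : Type*} [Field F] [AddCommGroup Γ] [LinearOrder Γ] [IsOrderedAddMonoid Γ]
  {v : F → WithTop Γ} {O : Subring F} {R : Type*} [Ring R] [Algebra O R]

theorem mem_vSupp {x : R} {γ : Γ} :
    γ ∈ vSupp v O x ↔ γ < 0 ∨ ∃ a : O, (∃ z : R, x = a • z) ∧ v a = γ := by
  simp only [vSupp, Set.mem_ofPred_eq, forall_mul_eq_smul_iff_exists_eq_smul]

theorem isLowerSet_vSupp (hv0 : ∀ x : F, v x = ⊤ ↔ x = 0)
    (hvmul : ∀ x y : F, v (x * y) = v x + v y) (hsurj : ∀ γ : Γ, ∃ x : F, v x = γ)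
    (hO : ∀ a : F, a ∈ O ↔ 0 ≤ v a) (x : R) : IsLowerSet (vSupp v O x) := by
  intro γ γ' hle hγ
  rcases lt_or_ge γ' 0 with hneg | hnonneg
  · exact mem_vSupp.mpr (Or.inl hneg)
  obtain ⟨a, ⟨z, rfl⟩, hva⟩ :=
    (mem_vSupp.mp hγ).resolve_left (not_lt.mpr (hnonneg.trans hle))
  obtain ⟨b, hvb⟩ := hsurj γ'
  have hbO : b ∈ O := (hO b).mpr (hvb ▸ WithTop.coe_nonneg.mpr hnonneg)
  obtain ⟨c, rfl⟩ := dvd_of_valuation_le hv0 hvmul hO (a := ⟨b, hbO⟩) hvb hva hle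
  exact mem_vSupp.mpr (Or.inr ⟨⟨b, hbO⟩, ⟨c • z, mul_smul _ _ z⟩, hvb⟩)

theorem vSupp_subset_vSupp_mul_right (x y : R) : vSupp v O x ⊆ vSupp v O (x * y) := by
  intro γ hγ
  obtain hneg | ⟨a, ⟨z, rfl⟩, hva⟩ := mem_vSupp.mp hγ
  · exact mem_vSupp.mpr (Or.inl hneg)
  · exact mem_vSupp.mpr (Or.inr ⟨a, ⟨z * y, smul_mul_assoc a z y⟩, hva⟩)

theorem vSupp_subset_vSupp_mul_left (x y : R) : vSupp v O y ⊆ vSupp v O (x * y) := by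
  intro γ hγ
  obtain hneg | ⟨b, ⟨z, rfl⟩, hvb⟩ := mem_vSupp.mp hγ
  · exact mem_vSupp.mpr (Or.inl hneg)
  · exact mem_vSupp.mpr (Or.inr ⟨b, ⟨x * z, mul_smul_comm b x z⟩, hvb⟩)

theorem add_vSupp_subset_vSupp_mul (hv0 : ∀ x : F, v x = ⊤ ↔ x = 0)
    (hvmul : ∀ x y : F, v (x * y) = v x + v y) (hsurj : ∀ γ : Γ, ∃ x : F, v x = γ)
    (hO : ∀ a : F, a ∈ O ↔ 0 ≤ v a) (x y : R) :
    vSupp v O x + vSupp v O y ⊆ vSupp v O (x * y) := by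
  have hlower := isLowerSet_vSupp hv0 hvmul hsurj hO (x * y)
  rintro _ ⟨γ₁, hγ₁, γ₂, hγ₂, rfl⟩
  rcases lt_or_ge γ₁ 0 with hneg₁ | hnonneg₁
  · exact hlower (add_le_of_nonpos_left hneg₁.le) (vSupp_subset_vSupp_mul_left x y hγ₂)
  rcases lt_or_ge γ₂ 0 with hneg₂ | hnonneg₂
  · exact hlower (add_le_of_nonpos_right hneg₂.le) (vSupp_subset_vSupp_mul_right x y hγ₁)
  obtain ⟨a, ⟨z, rfl⟩, hva⟩ := (mem_vSupp.mp hγ₁).resolve_left (not_lt.mpr hnonneg₁)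
  obtain ⟨b, ⟨w, rfl⟩, hvb⟩ := (mem_vSupp.mp hγ₂).resolve_left (not_lt.mpr hnonneg₂)
  refine mem_vSupp.mpr (Or.inr ⟨a * b, ⟨z * w, smul_mul_smul_comm a z b w⟩, ?_⟩)
  rw [Subring.coe_mul, hvmul, hva, hvb, WithTop.coe_add]

theorem inter_vSupp_subset_vSupp_add (hv0 : ∀ x : F, v x = ⊤ ↔ x = 0)
    (hvmul : ∀ x y : F, v (x * y) = v x + v y) (hO : ∀ a : F, a ∈ O ↔ 0 ≤ v a) (x y : R) :
    vSupp v O x ∩ vSupp v O y ⊆ vSupp v O (x + y) := by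
  rintro γ ⟨hγx, hγy⟩
  rcases lt_or_ge γ 0 with hneg | hnonneg
  · exact mem_vSupp.mpr (Or.inl hneg)
  obtain ⟨a, ⟨z, rfl⟩, hva⟩ := (mem_vSupp.mp hγx).resolve_left (not_lt.mpr hnonneg)
  obtain ⟨b, ⟨w, rfl⟩, hvb⟩ := (mem_vSupp.mp hγy).resolve_left (not_lt.mpr hnonneg)
  obtain ⟨c, rfl⟩ := dvd_of_valuation_le hv0 hvmul hO hva hvb le_rfl
  refine mem_vSupp.mpr (Or.inr ⟨a, ⟨z + c • w, ?_⟩, hva⟩)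
  rw [smul_add, mul_smul]

end vSupp

theorem stmt18_general {F Γ : Type*} [Field F] [AddCommGroup Γ] [LinearOrder Γ] [IsOrderedAddMonoid Γ]
    (v : F → WithTop Γ)
    (hv0 : ∀ x : F, v x = ⊤ ↔ x = 0)
    (hvmul : ∀ x y : F, v (x * y) = v x + v y)
    (hsurj : ∀ γ : Γ, ∃ x : F, v x = (γ : WithTop Γ))
    (O : Subring F) (hO : ∀ a : F, a ∈ O ↔ 0 ≤ v a)
    {R : Type*} [Ring R] [Algebra O R] :
    (∀ x : R, IsLowerSet (vSupp v O x)) ∧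
    (∀ x y : R, vSupp v O x + vSupp v O y ⊆ vSupp v O (x * y)) ∧
    (∀ x y : R, vSupp v O x ∩ vSupp v O y ⊆ vSupp v O (x + y)) :=
  ⟨isLowerSet_vSupp hv0 hvmul hsurj hO, add_vSupp_subset_vSupp_mul hv0 hvmul hsurj hO,
    inter_vSupp_subset_vSupp_add hv0 hvmul hO⟩

/-- Let `v` be an (additive) valuation on `F` with value group `Γ` and
valuation ring `O = O_v`, and `R` any `O_v`-algebra. Setting `w(0) = ∞` and, for
`x ≠ 0`, `w(x)` the cut of `Γ` with left set `v(S_x)`, `w` is a quasi-valuation with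
values in the cut monoid: each left set is an initial (lower) subset of `Γ`, the left
set of `w(x) + w(y)` (pointwise sum) is contained in that of `w(xy)`, and the left set
of `min{w(x), w(y)}` (the intersection) is contained in that of `w(x + y)`. -/
theorem stmt18 {F Γ : Type*} [Field F] [AddCommGroup Γ] [LinearOrder Γ] [IsOrderedAddMonoid Γ]
    (v : F → WithTop Γ)
    (hv0 : ∀ x : F, v x = ⊤ ↔ x = 0)
    (hvmul : ∀ x y : F, v (x * y) = v x + v y)
    (hvadd : ∀ x y : F, min (v x) (v y) ≤ v (x + y))
    (hsurj : ∀ γ : Γ, ∃ x : F, v x = (γ : WithTop Γ))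
    (O : Subring F) (hO : ∀ a : F, a ∈ O ↔ 0 ≤ v a)
    {R : Type*} [Ring R] [Algebra O R] :
    (∀ x : R, IsLowerSet (vSupp v O x)) ∧
    (∀ x y : R, vSupp v O x + vSupp v O y ⊆ vSupp v O (x * y)) ∧
    (∀ x y : R, vSupp v O x ∩ vSupp v O y ⊆ vSupp v O (x + y)) :=
  stmt18_general v hv0 hvmul hsurj O hO
end

section
/- Let C be a non-Noetherian integral domain with field of fractions F, and let I_1 ⊂ I_2 ⊂ ... be an infinite strictly ascending chain of nonzero ideals of C. For n ≥ 2 and each k, let R_k ⊆ M_n(F) be the set of matrices with entries in C except that the entries in the last column above the bottom row lie in I_k. Then each R_k is a C-nice subalgebra of M_n(F), and R_1 ⊂ R_2 ⊂ ... is an infinite strictly ascending chain of C-nice subalgebras of M_n(F). -/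
/-!
`Rₖ` is the image in `Mₙ(F)` of the subalgebra of `Mₙ(C)` of matrices whose last column lies in
`Iₖ` off the diagonal; this is closed under products because in `(MN)ᵢₙ = ∑ₗ MᵢₗNₗₙ` every term
has a factor from the last column off the diagonal. The diagonal entry `(n, n)` is unconstrained,
so `Rₖ ∩ F = C`; a nonzero `c ∈ Iₖ` puts `c • Mₙ(C)` inside `Rₖ`, so `Rₖ` spans `Mₙ(F)`; and
an element of `Iₖ₊₁ \ Iₖ` in the corner `(1, n)` separates `Rₖ₊₁` from `Rₖ`.
-/

namespace Matrix

variable {C : Type*} [CommRing C] {n : Type*} [Fintype n] [DecidableEq n]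

def columnIdealSubalgebra (I : Ideal C) (p : n) : Subalgebra C (Matrix n n C) where
  carrier := {N | ∀ i ≠ p, N i p ∈ I}
  mul_mem' {M N} hM hN i hi := by
    rw [mul_apply]
    refine Ideal.sum_mem _ fun l _ => ?_
    by_cases hl : l = p
    · subst hl
      exact I.mul_mem_right _ (hM i hi)
    · exact I.mul_mem_left _ (hN l hl)
  add_mem' hM hN i hi := I.add_mem (hM i hi) (hN i hi)
  algebraMap_mem' r i hi := by simp [algebraMap_matrix_apply, hi]

theorem columnIdealSubalgebra_mono {I J : Ideal C} (h : I ≤ J) (p : n) :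
    columnIdealSubalgebra I p ≤ columnIdealSubalgebra J p :=
  fun _ hN i hi => h (hN i hi)

theorem single_mem_columnIdealSubalgebra {I : Ideal C} {c : C} (hc : c ∈ I) (p i j : n) :
    single i j c ∈ columnIdealSubalgebra I p := by
  intro i' _
  by_cases h : i = i' ∧ j = p
  · obtain ⟨rfl, rfl⟩ := h
    simpa using hc
  · simp [single_apply_of_ne _ _ _ _ _ h]

variable (F : Type*) [CommRing F] [Algebra C F]

def columnIdealSubalgebraIn (I : Ideal C) (p : n) : Subalgebra C (Matrix n n F) :=
  (columnIdealSubalgebra I p).map (Algebra.ofId C F).mapMatrix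

variable {F}

theorem mem_columnIdealSubalgebraIn {I : Ideal C} {p : n} {M : Matrix n n F} :
    M ∈ columnIdealSubalgebraIn F I p ↔
      ∃ N ∈ columnIdealSubalgebra I p, N.map (algebraMap C F) = M :=
  Subalgebra.mem_map

theorem mem_columnIdealSubalgebraIn_iff_forall {I : Ideal C} {p : n} {M : Matrix n n F} :
    M ∈ columnIdealSubalgebraIn F I p ↔
      ∀ i j, if j = p ∧ i ≠ p then ∃ c ∈ I, algebraMap C F c = M i j
        else ∃ c : C, algebraMap C F c = M i j := by
  rw [mem_columnIdealSubalgebraIn]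
  constructor
  · rintro ⟨N, hN, rfl⟩ i j
    split_ifs with h
    · obtain ⟨rfl, hi⟩ := h
      exact ⟨N i j, hN i hi, rfl⟩
    · exact ⟨N i j, rfl⟩
  · intro hM
    have hlift : ∀ i j, ∃ c, (j = p ∧ i ≠ p → c ∈ I) ∧ algebraMap C F c = M i j := by
      intro i j
      have := hM i j
      split_ifs at this with h
      · obtain ⟨c, hc, hcM⟩ := this
        exact ⟨c, fun _ => hc, hcM⟩
      · obtain ⟨c, hcM⟩ := this
        exact ⟨c, fun h' => absurd h' h, hcM⟩
    choose N hNI hNM using hlift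
    exact ⟨of N, fun i hi => hNI i p ⟨rfl, hi⟩, ext hNM⟩

theorem algebraMap_mem_columnIdealSubalgebraIn_iff (I : Ideal C) (p : n) (x : F) :
    algebraMap F (Matrix n n F) x ∈ columnIdealSubalgebraIn F I p ↔
      ∃ c : C, algebraMap C F c = x := by
  constructor
  · intro hx
    obtain ⟨N, -, hN⟩ := mem_columnIdealSubalgebraIn.mp hx
    refine ⟨N p p, ?_⟩
    simpa [algebraMap_matrix_apply] using congrFun (congrFun hN p) p
  · rintro ⟨c, rfl⟩
    rw [← IsScalarTower.algebraMap_apply]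
    exact Subalgebra.algebraMap_mem _ c

theorem single_map_mem_columnIdealSubalgebraIn {I : Ideal C} {c : C} (hc : c ∈ I) (p i j : n) :
    single i j (algebraMap C F c) ∈ columnIdealSubalgebraIn F I p :=
  mem_columnIdealSubalgebraIn.mpr
    ⟨single i j c, single_mem_columnIdealSubalgebra hc p i j, map_single i j c _⟩

theorem span_columnIdealSubalgebraIn {F : Type*} [Field F] [Algebra C F]
    (hinj : Function.Injective (algebraMap C F)) {I : Ideal C} (hI : I ≠ ⊥) (p : n) :
    Submodule.span F (columnIdealSubalgebraIn F I p : Set (Matrix n n F)) = ⊤ := by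
  obtain ⟨c, hcI, hc0⟩ := Submodule.exists_mem_ne_zero_of_ne_bot hI
  have hc : algebraMap C F c ≠ 0 := (map_ne_zero_iff _ hinj).mpr hc0
  have hsingle : ∀ i j (a : F), single i j a ∈ Submodule.span F
      (columnIdealSubalgebraIn F I p : Set (Matrix n n F)) := by
    intro i j a
    have : single i j a = (a * (algebraMap C F c)⁻¹) • single i j (algebraMap C F c) := by
      rw [smul_single, smul_eq_mul, mul_assoc, inv_mul_cancel₀ hc, mul_one]
    rw [this]
    exact Submodule.smul_mem _ _
      (Submodule.subset_span (single_map_mem_columnIdealSubalgebraIn hcI p i j))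
  refine eq_top_iff.mpr fun M _ => ?_
  rw [matrix_eq_sum_single M]
  exact Submodule.sum_mem _ fun i _ => Submodule.sum_mem _ fun j _ => hsingle i j _

theorem columnIdealSubalgebraIn_strictMono (hinj : Function.Injective (algebraMap C F))
    {I J : Ideal C} (hIJ : I < J) {p q : n} (hqp : q ≠ p) :
    columnIdealSubalgebraIn F I p < columnIdealSubalgebraIn F J p := by
  refine lt_of_le_of_ne (Subalgebra.map_mono (columnIdealSubalgebra_mono hIJ.le p)) fun h => ?_
  obtain ⟨c, hcJ, hcI⟩ := SetLike.exists_of_lt hIJ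
  have hmem : single q p (algebraMap C F c) ∈ columnIdealSubalgebraIn F I p :=
    h ▸ single_map_mem_columnIdealSubalgebraIn hcJ p q p
  obtain ⟨N, hN, hNc⟩ := mem_columnIdealSubalgebraIn.mp hmem
  have hNqp : N q p = c := hinj (by simpa using congrFun (congrFun hNc q) p)
  exact hcI (hNqp ▸ hN q hqp)

end Matrix

open Matrix in
theorem stmt19_general {C F : Type*} [CommRing C] [Field F] [Algebra C F]
    [IsFractionRing C F]
    (I : ℕ → Ideal C) (hI0 : ∀ k, I k ≠ ⊥) (hIlt : ∀ k, I k < I (k + 1))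
    (m : ℕ)
    (Rset : ℕ → Set (Matrix (Fin (m + 2)) (Fin (m + 2)) F))
    (hRset : ∀ k, Rset k =
      {M | ∀ i j : Fin (m + 2),
        if j = Fin.last (m + 1) ∧ i ≠ Fin.last (m + 1)
        then ∃ c ∈ I k, algebraMap C F c = M i j
        else ∃ c : C, algebraMap C F c = M i j}) :
    (∀ k, ∃ Rk : Subalgebra C (Matrix (Fin (m + 2)) (Fin (m + 2)) F),
        (Rk : Set (Matrix (Fin (m + 2)) (Fin (m + 2)) F)) = Rset k ∧
        (∀ x : F, algebraMap F (Matrix (Fin (m + 2)) (Fin (m + 2)) F) x ∈ Rk ↔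
          ∃ c : C, algebraMap C F c = x) ∧
        Submodule.span F (Rset k) = ⊤) ∧
      ∀ k, Rset k ⊂ Rset (k + 1) := by
  have hinj := IsFractionRing.injective C F
  have hR : ∀ k, Rset k = columnIdealSubalgebraIn F (I k) (Fin.last (m + 1)) := fun k => by
    rw [hRset k]
    ext M
    exact mem_columnIdealSubalgebraIn_iff_forall.symm
  refine ⟨fun k => ⟨_, (hR k).symm, algebraMap_mem_columnIdealSubalgebraIn_iff _ _,
    (hR k) ▸ span_columnIdealSubalgebraIn hinj (hI0 k) _⟩, fun k => ?_⟩
  rw [hR, hR]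
  exact SetLike.coe_ssubset_coe.mpr
    (columnIdealSubalgebraIn_strictMono hinj (hIlt k) (Fin.castSucc_lt_last 0).ne)

/-- Let `C` be a non-Noetherian integral domain with fraction field `F`
and `I₁ ⊂ I₂ ⊂ ⋯` an infinite strictly ascending chain of nonzero ideals of `C`. For
`n = m + 2 ≥ 2`, let `Rₖ ⊆ Mₙ(F)` be the matrices with entries in `C`, except that the
entries of the last column above the bottom row lie in `Iₖ`. Then each `Rₖ` is a
`C`-nice subalgebra of `Mₙ(F)` (`Rₖ ∩ F = C` and `Rₖ F = Mₙ(F)`), and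
`R₁ ⊂ R₂ ⊂ ⋯` is an infinite strictly ascending chain of such subalgebras. -/
theorem stmt19 {C F : Type*} [CommRing C] [IsDomain C] [Field F] [Algebra C F]
    [IsFractionRing C F]
    (hC : ¬ IsNoetherianRing C)
    (I : ℕ → Ideal C) (hI0 : ∀ k, I k ≠ ⊥) (hIlt : ∀ k, I k < I (k + 1))
    (m : ℕ)
    (Rset : ℕ → Set (Matrix (Fin (m + 2)) (Fin (m + 2)) F))
    (hRset : ∀ k, Rset k =
      {M | ∀ i j : Fin (m + 2),
        if j = Fin.last (m + 1) ∧ i ≠ Fin.last (m + 1)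
        then ∃ c ∈ I k, algebraMap C F c = M i j
        else ∃ c : C, algebraMap C F c = M i j}) :
    (∀ k, ∃ Rk : Subalgebra C (Matrix (Fin (m + 2)) (Fin (m + 2)) F),
        (Rk : Set (Matrix (Fin (m + 2)) (Fin (m + 2)) F)) = Rset k ∧
        (∀ x : F, algebraMap F (Matrix (Fin (m + 2)) (Fin (m + 2)) F) x ∈ Rk ↔
          ∃ c : C, algebraMap C F c = x) ∧
        Submodule.span F (Rset k) = ⊤) ∧
      ∀ k, Rset k ⊂ Rset (k + 1) :=
  stmt19_general I hI0 hIlt m Rset hRset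
end
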